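/- arXiv:2404.07154 — 4 statements merged into one kernel-verified Lean document; each statement's English description precedes it below -/
import Mathlib

section
/- Let λ ∈ M_{m×k}(F_q) with rank(λ) = j, and let 0 ≤ i ≤ k. The number of matrices r ∈ M_{k×k}(F_q) with rank(r) = i and λ·r = 0 equals ∏_{ℓ=0}^{i-1}(q^k − q^ℓ) · [k−j choose i]_q if i ≤ k−j, and equals 0 if i > k−j. -/
/-- The Gaussian (q-)binomial coefficient, defined via the q-Pascal recursion. -/
def qbinom {R : Type*} [CommSemiring R] (q : R) : ℕ → ℕ → R
  | _, 0 => 1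
  | 0, _ + 1 => 0
  | n + 1, k + 1 => qbinom q n k + q ^ (k + 1) * qbinom q n (k + 1)

/-!
A matrix `r` with `l * r = 0` is a linear map `F^k → ker l`, and `ker l` has dimension `k - j`.
A linear map of rank `i` into a space `W` is the same as an `i`-dimensional subspace `U ≤ W`
(its range) together with a surjection `F^k → U`. Surjections `F^k → F^i` correspond to their
`i` linearly independent rows, of which there are `∏_{t<i} (q^k - q^t)`. Grouping the linearly
independent `i`-tuples of a `d`-dimensional space by their span shows that the number of
`i`-dimensional subspaces times `∏_{t<i} (q^i - q^t)` is `∏_{t<i} (q^d - q^t)`, which the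
q-Pascal recursion identifies with `[d choose i]_q * ∏_{t<i} (q^i - q^t)`. For `i > k - j` the
q-binomial coefficient vanishes.
-/

open Finset Module LinearMap

section QBinomial

theorem map_qbinom {R S G : Type*} [CommSemiring R] [CommSemiring S] [FunLike G R S]
    [RingHomClass G R S] (f : G) (q : R) : ∀ n k, f (qbinom q n k) = qbinom (f q) n k
  | _, 0 => by simp [qbinom]
  | 0, k + 1 => by simp [qbinom]
  | n + 1, k + 1 => by simp [qbinom, map_qbinom f q n]

theorem qbinom_eq_zero_of_lt {R : Type*} [CommSemiring R] (q : R) :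
    ∀ {n k : ℕ}, n < k → qbinom q n k = 0
  | 0, _ + 1, _ => rfl
  | n + 1, k + 1, h => by
    simp [qbinom, qbinom_eq_zero_of_lt q (Nat.lt_of_succ_lt_succ h),
      qbinom_eq_zero_of_lt q (Nat.lt_of_succ_lt h)]

variable {R : Type*} [CommRing R]

theorem prod_range_succ_pow_succ_sub (q : R) (n k : ℕ) :
    ∏ t ∈ range (k + 1), (q ^ (n + 1) - q ^ t) =
      (q ^ (n + 1) - 1) * q ^ k * ∏ t ∈ range k, (q ^ n - q ^ t) := by
  rw [prod_range_succ', pow_zero, prod_congr rfl fun t _ => show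
    q ^ (n + 1) - q ^ (t + 1) = q * (q ^ n - q ^ t) by ring, prod_mul_distrib, prod_const,
    card_range]
  ring

theorem qbinom_mul_prod_range_pow_sub (q : R) : ∀ n k : ℕ,
    qbinom q n k * ∏ t ∈ range k, (q ^ k - q ^ t) = ∏ t ∈ range k, (q ^ n - q ^ t)
  | _, 0 => by simp [qbinom]
  | 0, k + 1 => by
    rw [qbinom, zero_mul, prod_range_succ', pow_zero, sub_self, mul_zero]
  | n + 1, k + 1 => by
    have h₁ := qbinom_mul_prod_range_pow_sub q n k
    have h₂ := qbinom_mul_prod_range_pow_sub q n (k + 1)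
    rw [prod_range_succ_pow_succ_sub, prod_range_succ] at h₂
    rw [prod_range_succ_pow_succ_sub, prod_range_succ_pow_succ_sub, qbinom]
    linear_combination ((q ^ (k + 1) - 1) * q ^ k) * h₁ + q ^ (k + 1) * h₂

theorem Nat.qbinom_mul_prod_range_pow_sub {q n k : ℕ} (hq : 1 ≤ q) (hkn : k ≤ n) :
    qbinom q n k * ∏ t ∈ range k, (q ^ k - q ^ t) = ∏ t ∈ range k, (q ^ n - q ^ t) := by
  have cast_prod : ∀ m, k ≤ m → ((∏ t ∈ range k, (q ^ m - q ^ t) : ℕ) : ℤ) =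
      ∏ t ∈ range k, ((q : ℤ) ^ m - (q : ℤ) ^ t) := fun m hm => by
    push_cast [prod_congr rfl fun t ht => Nat.cast_sub (R := ℤ)
      (Nat.pow_le_pow_right hq ((mem_range.1 ht).le.trans hm))]
    rfl
  apply Nat.cast_injective (R := ℤ)
  rw [Nat.cast_mul, cast_prod k le_rfl, cast_prod n hkn,
    show ((qbinom q n k : ℕ) : ℤ) = qbinom (q : ℤ) n k from
      map_qbinom (Nat.castRingHom ℤ) q n k,
    _root_.qbinom_mul_prod_range_pow_sub]

end QBinomial

theorem Nat.card_eq_card_mul_of_card_fiber {α β : Type*} [Finite α] [Finite β] (f : α → β)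
    (p : β → Prop) (hf : ∀ a, p (f a)) {c : ℕ}
    (hc : ∀ b, p b → Nat.card {a // f a = b} = c) :
    Nat.card α = Nat.card {b // p b} * c := by
  have := Fintype.ofFinite {b // p b}
  rw [← Nat.card_congr (Equiv.sigmaSubtypeFiberEquiv f p hf), Nat.card_sigma,
    sum_congr rfl fun b _ => hc b.1 b.2, sum_const, Finset.card_univ, smul_eq_mul,
    Nat.card_eq_fintype_card]

theorem Matrix.surjective_mulVecLin_iff_linearIndependent_row {K m n : Type*} [Field K]
    [Fintype m] [Fintype n] (A : Matrix m n K) :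
    Function.Surjective A.mulVecLin ↔ LinearIndependent K A.row := by
  rw [← range_eq_top, linearIndependent_iff_card_eq_finrank_span, Set.finrank,
    ← rank_eq_finrank_span_row, Matrix.rank, ← finrank_fintype_fun_eq_card K]
  exact ⟨fun h => by rw [h, finrank_top], fun h => Submodule.eq_top_of_finrank_eq h.symm⟩

section Equivalences

variable {K V M : Type*} [DivisionRing K] [AddCommGroup V] [Module K V]
  [AddCommGroup M] [Module K M]

def linearIndependentSpanEqEquiv [FiniteDimensional K V] {n : ℕ} (U : Submodule K V)
    (hU : finrank K U = n) :
    {s : {s : Fin n → V // LinearIndependent K s} // Submodule.span K (Set.range s.1) = U} ≃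
      {s : Fin n → U // LinearIndependent K s} where
  toFun s := ⟨fun t => ⟨s.1.1 t, s.2.le (Submodule.subset_span (Set.mem_range_self t))⟩,
    .of_comp U.subtype s.1.2⟩
  invFun s := ⟨⟨U.subtype ∘ s.1, s.2.map' U.subtype U.ker_subtype⟩, by
    have hspan : Submodule.span K (Set.range s.1) = ⊤ := Submodule.eq_top_of_finrank_eq <| by
      rw [finrank_span_eq_card s.2, Fintype.card_fin, hU]
    rw [Set.range_comp, ← Submodule.map_span, hspan, Submodule.map_subtype_top]⟩

def rangeEqEquivSurjective (U : Submodule K M) :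
    {f : V →ₗ[K] M // range f = U} ≃ {π : V →ₗ[K] U // Function.Surjective π} where
  toFun f := ⟨codRestrict U f.1 fun x => f.2.le (mem_range_self f.1 x), fun u => by
    obtain ⟨x, hx⟩ := f.2.ge u.2
    exact ⟨x, Subtype.ext hx⟩⟩
  invFun π := ⟨U.subtype ∘ₗ π.1, by
    rw [range_comp, range_eq_top.2 π.2, Submodule.map_subtype_top]⟩

end Equivalences

section Counting

variable {F V M : Type*} [Field F] [Fintype F] [AddCommGroup V] [Module F V] [Finite V]
  [AddCommGroup M] [Module F M] [Finite M]

theorem card_surjective_linearMap_fin {i k : ℕ} (hik : i ≤ k) :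
    Nat.card {π : (Fin k → F) →ₗ[F] (Fin i → F) // Function.Surjective π} =
      ∏ t ∈ range i, (Fintype.card F ^ k - Fintype.card F ^ t) := by
  let e : {π : (Fin k → F) →ₗ[F] (Fin i → F) // Function.Surjective π} ≃
      {s : Fin i → Fin k → F // LinearIndependent F s} :=
    Matrix.toLin'.toEquiv.symm.subtypeEquiv fun π => by
      have := (Matrix.toLin'.symm π).surjective_mulVecLin_iff_linearIndependent_row
      rwa [← Matrix.toLin'_apply', LinearEquiv.apply_symm_apply] at this
  rw [Nat.card_congr e, card_linearIndependent (by simpa using hik), finrank_fin_fun,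
    Fin.prod_univ_eq_prod_range (fun t => Fintype.card F ^ k - Fintype.card F ^ t)]

theorem card_surjective_linearMap :
    Nat.card {π : V →ₗ[F] M // Function.Surjective π} =
      ∏ t ∈ range (finrank F M), (Fintype.card F ^ finrank F V - Fintype.card F ^ t) := by
  by_cases h : finrank F M ≤ finrank F V
  · let eV := LinearEquiv.ofFinrankEq V (Fin (finrank F V) → F) (finrank_fin_fun F).symm
    let eM := LinearEquiv.ofFinrankEq M (Fin (finrank F M) → F) (finrank_fin_fun F).symm
    rw [← card_surjective_linearMap_fin h,
      Nat.card_congr ((eV.arrowCongr eM).toEquiv.subtypeEquiv fun π => ?_)]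
    change _ ↔ Function.Surjective (eM ∘ π ∘ eV.symm)
    rw [EquivLike.comp_surjective, EquivLike.surjective_comp]
  · push Not at h
    rw [prod_eq_zero (mem_range.2 h) (Nat.sub_self (Fintype.card F ^ finrank F V)),
      Nat.card_eq_zero]
    refine Or.inl ⟨fun ⟨π, hπ⟩ => ?_⟩
    have := finrank_range_le π
    rw [range_eq_top.2 hπ, finrank_top] at this
    omega

theorem card_submodule_finrank_eq (i : ℕ) :
    Nat.card {U : Submodule F V // finrank F U = i} = qbinom (Fintype.card F) (finrank F V) i := by
  by_cases hi : i ≤ finrank F V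
  · have hfib := Nat.card_eq_card_mul_of_card_fiber
      (fun s : {s : Fin i → V // LinearIndependent F s} => Submodule.span F (Set.range s.1))
      (fun U => finrank F U = i) (fun s => by simpa using finrank_span_eq_card s.2)
      (c := ∏ t ∈ range i, (Fintype.card F ^ i - Fintype.card F ^ t)) fun U hU => by
        rw [Nat.card_congr (linearIndependentSpanEqEquiv U hU), card_linearIndependent hU.ge,
          hU, Fin.prod_univ_eq_prod_range (fun t => Fintype.card F ^ i - Fintype.card F ^ t)]
    rw [card_linearIndependent hi,
      Fin.prod_univ_eq_prod_range (fun t => Fintype.card F ^ finrank F V - Fintype.card F ^ t),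
      ← Nat.qbinom_mul_prod_range_pow_sub Fintype.card_pos hi] at hfib
    refine (Nat.eq_of_mul_eq_mul_right (prod_pos fun t ht => Nat.sub_pos_of_lt ?_) hfib).symm
    exact Nat.pow_lt_pow_right Fintype.one_lt_card (mem_range.1 ht)
  · rw [qbinom_eq_zero_of_lt _ (not_le.1 hi), Nat.card_eq_zero]
    exact Or.inl ⟨fun ⟨U, hU⟩ => hi (hU ▸ Submodule.finrank_le U)⟩

theorem card_linearMap_range_le_finrank_eq (W : Submodule F M) (i : ℕ) :
    Nat.card {f : V →ₗ[F] M // range f ≤ W ∧ finrank F (range f) = i} =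
      (∏ t ∈ range i, (Fintype.card F ^ finrank F V - Fintype.card F ^ t)) *
        qbinom (Fintype.card F) (finrank F W) i := by
  have hsub : Nat.card {U : Submodule F M // U ≤ W ∧ finrank F U = i} =
      qbinom (Fintype.card F) (finrank F W) i := by
    rw [← card_submodule_finrank_eq, ← Nat.card_congr
      (((Submodule.MapSubtype.orderIso W).toEquiv.subtypeEquiv fun U => ?_).trans
        (Equiv.subtypeSubtypeEquivSubtypeInter (· ≤ W) (fun U => finrank F U = i)))]
    exact (Submodule.finrank_map_subtype_eq W U).symm ▸ Iff.rfl
  have hfiber (U : Submodule F M) (hU : U ≤ W ∧ finrank F U = i) :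
      Nat.card {f : {f : V →ₗ[F] M // range f ≤ W ∧ finrank F (range f) = i} //
        range f.1 = U} =
        ∏ t ∈ range i, (Fintype.card F ^ finrank F V - Fintype.card F ^ t) := by
    rw [Nat.card_congr ((Equiv.subtypeSubtypeEquivSubtype fun h => h ▸ hU).trans
      (rangeEqEquivSurjective U)), card_surjective_linearMap, hU.2]
  have : Finite (V →ₗ[F] M) := Module.finite_of_finite F
  rw [Nat.card_eq_card_mul_of_card_fiber (fun f => LinearMap.range f.1)
    (fun U => U ≤ W ∧ finrank F U = i) (fun f => f.2) hfiber, hsub, mul_comm]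

end Counting

theorem count_rank_annihilators_general (F : Type*) [Field F] [Fintype F] (k m i j : ℕ)
    (l : Matrix (Fin m) (Fin k) F) (hj : l.rank = j) :
    (i ≤ k - j →
      Nat.card {r : Matrix (Fin k) (Fin k) F // r.rank = i ∧ l * r = 0} =
        (∏ t ∈ Finset.range i, ((Fintype.card F) ^ k - (Fintype.card F) ^ t)) *
          qbinom (Fintype.card F) (k - j) i) ∧
    (k - j < i →
      Nat.card {r : Matrix (Fin k) (Fin k) F // r.rank = i ∧ l * r = 0} = 0) := by
  have hker : finrank F (ker (Matrix.toLin' l)) = k - j := by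
    have hrank : finrank F (range (Matrix.toLin' l)) = j := hj
    have := finrank_range_add_finrank_ker (Matrix.toLin' l)
    rw [finrank_fin_fun] at this
    omega
  have hcount : Nat.card {r : Matrix (Fin k) (Fin k) F // r.rank = i ∧ l * r = 0} =
      (∏ t ∈ range i, (Fintype.card F ^ k - Fintype.card F ^ t)) *
        qbinom (Fintype.card F) (k - j) i := by
    rw [Nat.card_congr (Matrix.toLin'.toEquiv.subtypeEquiv fun r => ?_),
      card_linearMap_range_le_finrank_eq, finrank_fin_fun, hker]
    rw [and_comm, ← Matrix.toLin'.map_eq_zero_iff, Matrix.toLin'_mul, ← range_le_ker_iff,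
      Matrix.rank, ← Matrix.toLin'_apply']
    rfl
  exact ⟨fun _ => hcount, fun h => by rw [hcount, qbinom_eq_zero_of_lt _ h, mul_zero]⟩

/-- Let `λ ∈ M_{m×k}(F_q)` with `rank λ = j` and `0 ≤ i ≤ k`.  The number of
`r ∈ M_{k×k}(F_q)` with `rank r = i` and `λ·r = 0` equals
`∏_{ℓ=0}^{i-1}(q^k − q^ℓ) · [k−j choose i]_q` if `i ≤ k−j`, and `0` if `i > k−j`. -/
theorem count_rank_annihilators (F : Type*) [Field F] [Fintype F] (k m i j : ℕ)
    (l : Matrix (Fin m) (Fin k) F) (hj : l.rank = j) (hik : i ≤ k) :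
    (i ≤ k - j →
      Nat.card {r : Matrix (Fin k) (Fin k) F // r.rank = i ∧ l * r = 0} =
        (∏ t ∈ Finset.range i, ((Fintype.card F) ^ k - (Fintype.card F) ^ t)) *
          qbinom (Fintype.card F) (k - j) i) ∧
    (k - j < i →
      Nat.card {r : Matrix (Fin k) (Fin k) F // r.rank = i ∧ l * r = 0} = 0) :=
  count_rank_annihilators_general F k m i j l hj
end

section
/- For integers 0 < s < k < m and q ≥ 2, one has q^k ≤ [m choose s]_q − [m−1 choose s]_q, where [· choose ·]_q is the Gaussian binomial coefficient. -/
lemma qbinom_zero_right {R : Type*} [CommSemiring R] (q : R) (n : ℕ) :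
    qbinom q n 0 = 1 := by cases n <;> rfl

lemma qbinom_def {R : Type*} [CommSemiring R] (q : R) (n k : ℕ) :
    qbinom q (n + 1) (k + 1) = qbinom q n k + q ^ (k + 1) * qbinom q n (k + 1) := by
  rw [qbinom]

lemma qbinom_eq_zero {R : Type*} [CommSemiring R] (q : R) :
    ∀ n k : ℕ, n < k → qbinom q n k = 0 := by
  intro n
  induction n with
  | zero => intro k hk; match k, hk with | k + 1, _ => rfl
  | succ m ih =>
      intro k hk
      match k, hk with
      | k + 1, hk =>
        rw [qbinom_def, ih k (by omega), ih (k+1) (by omega)]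
        ring

lemma qbinom_self {R : Type*} [CommSemiring R] (q : R) (n : ℕ) :
    qbinom q n n = 1 := by
  induction n with
  | zero => rfl
  | succ m ih => rw [qbinom_def, ih, qbinom_eq_zero q m (m+1) (by omega)]; ring

/-- The other q-Pascal identity. -/
lemma qbinom_succ_succ {R : Type*} [CommSemiring R] (q : R) :
    ∀ n k : ℕ, k ≤ n →
      qbinom q (n + 1) (k + 1) = q ^ (n - k) * qbinom q n k + qbinom q n (k + 1) := by
  intro n
  induction n with
  | zero =>
      intro k hk
      interval_cases k
      simp [qbinom_def, qbinom_zero_right, qbinom_eq_zero q 0 1 (by omega)]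
  | succ m ih =>
      intro k hk
      rcases Nat.eq_or_lt_of_le hk with h | h
      · subst h
        rw [qbinom_def, qbinom_self, qbinom_eq_zero q (m+1) (m+1+1) (by omega),
          Nat.sub_self]
        ring
      · have hkm : k ≤ m := by omega
        match k with
        | 0 =>
            have h1 : qbinom q (m+1) 1 = 1 + q ^ 1 * qbinom q m 1 := by
              rw [qbinom_def, qbinom_zero_right]
            have h2 := ih 0 (by omega)
            rw [qbinom_zero_right] at h2
            rw [qbinom_def, qbinom_zero_right]
            conv_lhs => rw [h2]
            conv_rhs => rw [h1]
            simp only [Nat.sub_zero, Nat.zero_add, mul_one]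
            ring
        | j + 1 =>
            have hj : j ≤ m := by omega
            have hA := ih j hj
            have hB := ih (j+1) hkm
            have dA := qbinom_def q m j
            have dB := qbinom_def q m (j+1)
            rw [qbinom_def]
            conv_lhs => rw [hA, hB]
            conv_rhs => rw [dA, dB]
            rw [show m + 1 - (j + 1) = (m - (j+1)) + 1 from by omega,
                show m - j = (m - (j+1)) + 1 from by omega]
            ring

lemma qpow_le_qbinom (q : ℕ) :
    ∀ n k : ℕ, k ≤ n → q ^ (k * (n - k)) ≤ qbinom q n k := by
  intro n
  induction n with
  | zero => intro k hk; interval_cases k; simp [qbinom_zero_right]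
  | succ m ih =>
      intro k hk
      match k with
      | 0 => simp [qbinom_zero_right]
      | j + 1 =>
          rcases Nat.eq_or_lt_of_le hk with h | h
          · obtain rfl : j = m := by omega
            rw [qbinom_self, Nat.sub_self, Nat.mul_zero, pow_zero]
          · have hj : j + 1 ≤ m := by omega
            rw [qbinom_def]
            calc q ^ ((j+1) * (m + 1 - (j+1)))
                = q ^ (j+1) * q ^ ((j+1) * (m - (j+1))) := by
                  rw [← pow_add]
                  congr 1
                  rw [show m + 1 - (j+1) = (m - (j+1)) + 1 from by omega]
                  ring
              _ ≤ q ^ (j+1) * qbinom q m (j+1) :=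
                  Nat.mul_le_mul_left _ (ih (j+1) hj)
              _ ≤ qbinom q m j + q ^ (j+1) * qbinom q m (j+1) := Nat.le_add_left _ _

/-- For integers `0 < s < k < m` and `q ≥ 2`,
`q^k ≤ [m choose s]_q − [m−1 choose s]_q`. -/
theorem qpow_le_qbinom_diff (q k s m : ℕ) (hq : 2 ≤ q)
    (hs : 0 < s) (hsk : s < k) (hkm : k < m) :
    q ^ k ≤ qbinom q m s - qbinom q (m - 1) s := by
  obtain ⟨m', rfl⟩ : ∃ m', m = m' + 1 := ⟨m - 1, by omega⟩
  obtain ⟨s', rfl⟩ : ∃ s', s = s' + 1 := ⟨s - 1, by omega⟩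
  have hsm : s' ≤ m' := by omega
  rw [Nat.add_sub_cancel, qbinom_succ_succ q m' s' hsm, Nat.add_sub_cancel]
  have h1 : q ^ (s' * (m' - s')) ≤ qbinom q m' s' := qpow_le_qbinom q m' s' hsm
  have h3 : s' ≤ s' * (m' - s') := Nat.le_mul_of_pos_right _ (by omega)
  have hk : k ≤ m' - s' + s' * (m' - s') := by
    calc k ≤ m' := by omega
      _ = s' + (m' - s') := by omega
      _ ≤ s' * (m' - s') + (m' - s') := Nat.add_le_add_right h3 _
      _ = m' - s' + s' * (m' - s') := Nat.add_comm _ _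
  calc q ^ k ≤ q ^ (m' - s' + s' * (m' - s')) := Nat.pow_le_pow_right (by omega) hk
    _ = q ^ (m' - s') * q ^ (s' * (m' - s')) := pow_add q _ _
    _ ≤ q ^ (m' - s') * qbinom q m' s' := Nat.mul_le_mul_left _ h1
end

section
/- Let R be a finite ring and w an egalitarian weight on R with constant γ (meaning ∑_{b∈B} w(b) = γ|B| for every nonzero left ideal B ⊆ R). If C ⊆ R^n is an R-linear code, then ∑_{c∈C} w(c) = γ · |C| · (number of indices i such that the i-th coordinate functional of C is nonzero). -/
open Classical

lemma fiber_card {R M : Type*} [Ring R] [Fintype R] [DecidableEq R]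
    [AddCommGroup M] [Module R M] [Fintype M]
    (f : M →ₗ[R] R) (x0 : M) :
    (Finset.univ.filter (fun x : M => f x = f x0)).card = Nat.card (LinearMap.ker f) := by
  rw [Nat.card_eq_fintype_card, ← Fintype.card_subtype]
  refine Fintype.card_congr ⟨fun x => ⟨x.1 - x0, by simp [LinearMap.mem_ker, x.2]⟩,
    fun y => ⟨y.1 + x0, ?_⟩, fun x => by simp, fun y => by simp⟩
  have := y.2
  simp only [LinearMap.mem_ker] at this
  simp [this]

lemma sum_w_comp {R M : Type*} [Ring R] [Fintype R] [DecidableEq R]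
    [AddCommGroup M] [Module R M] [Fintype M]
    (w : R → ℚ) (γ : ℚ)
    (hegal : ∀ B : Submodule R R, B ≠ ⊥ →
      ∑ b ∈ Finset.univ.filter (fun r : R => r ∈ B), w b = γ * Nat.card B)
    (f : M →ₗ[R] R) (hf : f ≠ 0) :
    ∑ x : M, w (f x) = γ * Fintype.card M := by
  rw [Finset.sum_comp]
  have himg : Finset.univ.image (fun x => f x) =
      Finset.univ.filter (fun r : R => r ∈ LinearMap.range f) := by
    ext r; simp [LinearMap.mem_range, eq_comm]
  have hrange : LinearMap.range f ≠ ⊥ := by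
    simpa [LinearMap.range_eq_bot] using hf
  calc ∑ b ∈ Finset.univ.image (fun x => f x),
        (Finset.univ.filter (fun x : M => f x = b)).card • w b
      = ∑ b ∈ Finset.univ.filter (fun r : R => r ∈ LinearMap.range f),
          (Nat.card (LinearMap.ker f) : ℚ) * w b := by
        rw [himg]
        refine Finset.sum_congr rfl fun b hb => ?_
        simp only [Finset.mem_filter, LinearMap.mem_range] at hb
        obtain ⟨x0, rfl⟩ := hb.2
        rw [fiber_card f x0, nsmul_eq_mul]
    _ = (Nat.card (LinearMap.ker f) : ℚ) * (γ * Nat.card (LinearMap.range f)) := by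
        rw [← Finset.mul_sum, hegal _ hrange]
    _ = γ * Fintype.card M := by
        have : Nat.card (LinearMap.ker f) * Nat.card (LinearMap.range f) = Fintype.card M := by
          rw [← Nat.card_eq_fintype_card,
            ← Nat.card_congr (f.quotKerEquivRange).toEquiv]
          exact (Submodule.card_eq_card_quotient_mul_card (LinearMap.ker f)).symm
        push_cast [← this]
        ring

open Classical in
/-- Let `R` be a finite ring and `w` an egalitarian weight on `R` with constant `γ`
(so `∑_{b ∈ B} w(b) = γ|B|` for every nonzero left ideal `B ⊆ R`).  If `C ⊆ R^n` is the
linear code which is the image of an injective homomorphism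
`Λ = (λ_1, …, λ_n) : M → R^n` of left `R`-modules, then
`∑_{c ∈ C} w(c) = γ · |C| · |{i : λ_i ≠ 0}|` (the last factor is the effective length). -/
theorem egalitarian_weight_sum
    (R : Type*) [Ring R] [Fintype R] [DecidableEq R]
    (M : Type*) [AddCommGroup M] [Module R M] [Fintype M]
    (w : R → ℚ) (hw0 : w 0 = 0) (γ : ℚ)
    (hegal : ∀ B : Submodule R R, B ≠ ⊥ →
      ∑ b ∈ Finset.univ.filter (fun r : R => r ∈ B), w b = γ * Nat.card B)
    (n : ℕ) (Λ : Fin n → (M →ₗ[R] R))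
    (hinj : Function.Injective (fun x : M => fun i : Fin n => Λ i x)) :
    ∑ c ∈ Finset.image (fun x : M => fun i : Fin n => Λ i x) Finset.univ,
        (∑ i, w (c i)) =
      γ * (Finset.image (fun x : M => fun i : Fin n => Λ i x) Finset.univ).card *
        Nat.card {i : Fin n // Λ i ≠ 0} := by
  rw [Finset.sum_image (fun a _ b _ h => hinj h),
    Finset.card_image_of_injective _ hinj, Finset.card_univ]
  rw [Finset.sum_comm]
  have : ∀ i : Fin n, ∑ x : M, w (Λ i x) = if Λ i ≠ 0 then γ * Fintype.card M else 0 := by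
    intro i
    by_cases h : Λ i = 0
    · simp [h, hw0]
    · simp only [h, ne_eq, not_false_eq_true, if_true]
      exact sum_w_comp w γ hegal (Λ i) h
  rw [Finset.sum_congr rfl (fun i _ => this i), Finset.sum_ite, Finset.sum_const,
    Finset.sum_const_zero, add_zero, nsmul_eq_mul]
  rw [Nat.card_eq_fintype_card, Fintype.card_subtype]
  ring
end

section
/- For the homogeneous weight values w_1, w_2 on M_{k×k}(F_q) (common values on rank-1 and rank-2 matrices respectively, with average ζ), one has 2w_2 − w_1 = ζ·((q^k−2)(q^{k−1}−1) − 2)/((q^k−1)(q^{k−1}−1)); consequently 2w_2 − w_1 > 0 for all k ≥ 2 and q ≥ 2 except k = q = 2, where 2w_2 − w_1 = 0. -/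
/-- The values of the homogeneous weight on `M_{k×k}(F_q)` with average value `ζ`:
`w 0 = 0` and, on matrices of rank `ρ ≥ 1`,
`w ρ = ζ (1 − (−1)^ρ / ((q^k−1)(q^(k−1)−1)⋯(q^(k−ρ+1)−1)))`. -/
noncomputable def homogWt (q k : ℕ) (ζ : ℝ) (ρ : ℕ) : ℝ :=
  if ρ = 0 then 0
  else ζ * (1 - (-1 : ℝ) ^ ρ / ∏ i ∈ Finset.range ρ, ((q : ℝ) ^ (k - i) - 1))

/-- For the homogeneous weight values `w_1, w_2` on `M_{k×k}(F_q)`: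
`2w_2 − w_1 = ζ ((q^k−2)(q^(k−1)−1) − 2)/((q^k−1)(q^(k−1)−1))`; consequently
`2w_2 − w_1 > 0` for all `k ≥ 2`, `q ≥ 2` except `k = q = 2`, where `2w_2 − w_1 = 0`. -/
theorem homogWt_two_w2_sub_w1 (q k : ℕ) (ζ : ℝ) (hq : 2 ≤ q) (hk : 2 ≤ k) (hζ : 0 < ζ) :
    2 * homogWt q k ζ 2 - homogWt q k ζ 1 =
      ζ * (((q : ℝ) ^ k - 2) * ((q : ℝ) ^ (k - 1) - 1) - 2) /
        (((q : ℝ) ^ k - 1) * ((q : ℝ) ^ (k - 1) - 1)) ∧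
    (¬(k = 2 ∧ q = 2) → 0 < 2 * homogWt q k ζ 2 - homogWt q k ζ 1) ∧
    (k = 2 ∧ q = 2 → 2 * homogWt q k ζ 2 - homogWt q k ζ 1 = 0) := by
  have hq2 : (2 : ℝ) ≤ (q : ℝ) := by exact_mod_cast hq
  have hAk : (2 : ℝ) ≤ (q : ℝ) ^ (k - 1) := by
    calc (2 : ℝ) = 2 ^ 1 := by norm_num
    _ ≤ (q : ℝ) ^ (k - 1) := by
        apply pow_le_pow_left₀ (by norm_num) hq2 1 |>.trans
        exact pow_le_pow_right₀ (by linarith) (by omega)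
  have hA : (2 : ℝ) ^ 2 ≤ (q : ℝ) ^ k := by
    calc (2 : ℝ) ^ 2 ≤ (q : ℝ) ^ 2 := by nlinarith
    _ ≤ (q : ℝ) ^ k := pow_le_pow_right₀ (by linarith) hk
  have hApos : (0 : ℝ) < (q : ℝ) ^ k - 1 := by nlinarith
  have hBpos : (0 : ℝ) < (q : ℝ) ^ (k - 1) - 1 := by linarith
  have heval : 2 * homogWt q k ζ 2 - homogWt q k ζ 1 =
      ζ * (((q : ℝ) ^ k - 2) * ((q : ℝ) ^ (k - 1) - 1) - 2) /
        (((q : ℝ) ^ k - 1) * ((q : ℝ) ^ (k - 1) - 1)) := by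
    simp only [homogWt]
    norm_num [Finset.prod_range_succ]
    field_simp
    ring
  refine ⟨heval, ?_, ?_⟩
  · intro hne
    rw [heval]
    have hnum : (0 : ℝ) < ((q : ℝ) ^ k - 2) * ((q : ℝ) ^ (k - 1) - 1) - 2 := by
      rcases Nat.lt_or_ge q 3 with hq3 | hq3
      · -- q = 2, so k ≥ 3
        have hq2' : q = 2 := by omega
        have hk3 : 3 ≤ k := by
          rcases Nat.lt_or_ge k 3 with h | h
          · exact absurd ⟨by omega, hq2'⟩ hne
          · exact h
        subst hq2'
        have h1 : (2 : ℝ) ^ 3 ≤ (2 : ℝ) ^ k := by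
          exact_mod_cast pow_le_pow_right₀ (by norm_num) hk3
        have h2 : (2 : ℝ) ^ 2 ≤ (2 : ℝ) ^ (k - 1) := by
          exact_mod_cast pow_le_pow_right₀ (by norm_num) (by omega)
        push_cast
        nlinarith
      · have hq3' : (3 : ℝ) ≤ (q : ℝ) := by exact_mod_cast hq3
        have h1 : (3 : ℝ) ^ 2 ≤ (q : ℝ) ^ k := by
          calc (3 : ℝ) ^ 2 ≤ (q : ℝ) ^ 2 := by nlinarith
          _ ≤ (q : ℝ) ^ k := pow_le_pow_right₀ (by linarith) hk
        have h2 : (3 : ℝ) ≤ (q : ℝ) ^ (k - 1) := by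
          calc (3 : ℝ) = 3 ^ 1 := by norm_num
          _ ≤ (q : ℝ) ^ (k - 1) := by
              calc (3 : ℝ) ^ 1 ≤ (q : ℝ) ^ 1 := by nlinarith
              _ ≤ (q : ℝ) ^ (k - 1) := pow_le_pow_right₀ (by linarith) (by omega)
        nlinarith
    positivity
  · rintro ⟨hk2, hq2'⟩
    subst hk2; subst hq2'
    rw [heval]
    norm_num
end
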